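/- arXiv:2410.23001 — 2 statements merged into one kernel-verified Lean document; each statement's English description precedes it below -/
import Mathlib

section
/- (Optimal forecast via conditional maximum entropy.) Let Ω be a finite set, X : Ω → 𝒳 a surjection onto a finite set 𝒳, 𝒜 a finite action set, ℓ : 𝒜 × Ω → ℝ a loss function, and 𝒫 a nonempty set of probability measures on Ω with closed convex hull 𝒦 in ℝ^Ω. Suppose P* ∈ 𝒦 satisfies H_ℓ(P*|X) ≥ H_ℓ(P|X) for all P ∈ 𝒦, that P*(X=x) > 0 for every x ∈ 𝒳, and that for every x ∈ 𝒳 the set argmin_{a∈𝒜} E_{P*(·|X=x)}[ℓ(a,·)] is a singleton {a*(x)}. Then min over all maps g : 𝒳 → 𝒜 of sup_{P∈𝒫} E_P[ω ↦ ℓ(g(X(ω)),ω)] equals sup_{P∈𝒫} E_P[ω ↦ ℓ(a*(X(ω)),ω)], which equals E_{P*}[ω ↦ ℓ(a*(X(ω)),ω)] = H_ℓ(P*|X); hence the precise forecast f*(x) := P*(·|X=x) attains the optimal IP score among all forecasts under a 𝒫 data model. -/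
/-- `P` is a probability measure on the finite set `Ω`. -/
def IsProb {Ω : Type*} [Fintype Ω] (P : Ω → ℝ) : Prop :=
  (∀ ω, 0 ≤ P ω) ∧ ∑ ω, P ω = 1

/-- Expectation of the gamble `Z` under `P`. -/
noncomputable def expct {Ω : Type*} [Fintype Ω] (P Z : Ω → ℝ) : ℝ :=
  ∑ ω, P ω * Z ω

/-- Upper expectation of the gamble `Z` over the set of probability measures `Ps`. -/
noncomputable def upExp {Ω : Type*} [Fintype Ω] (Ps : Set (Ω → ℝ)) (Z : Ω → ℝ) : ℝ :=
  sSup ((fun P => expct P Z) '' Ps)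

/-- The marginal probability `P(X = x)`. -/
noncomputable def margin {Ω 𝒳 : Type*} [Fintype Ω] [DecidableEq 𝒳]
    (X : Ω → 𝒳) (P : Ω → ℝ) (x : 𝒳) : ℝ :=
  ∑ ω, if X ω = x then P ω else 0

/-- The conditional probability measure `P(· | X = x)`. -/
noncomputable def condX {Ω 𝒳 : Type*} [Fintype Ω] [DecidableEq 𝒳]
    (X : Ω → 𝒳) (P : Ω → ℝ) (x : 𝒳) : Ω → ℝ :=
  fun ω => if X ω = x then P ω / margin X P x else 0

open scoped Classical in
/-- The generalized conditional `ℓ`-entropy `H_ℓ(P | X)`. -/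
noncomputable def condEnt {Ω 𝒳 𝒜 : Type*} [Fintype Ω] [Fintype 𝒳] [DecidableEq 𝒳]
    [Fintype 𝒜] (X : Ω → 𝒳) (ℓ : 𝒜 → Ω → ℝ) (P : Ω → ℝ) : ℝ :=
  ∑ x, if 0 < margin X P x then
    margin X P x * (⨅ a : 𝒜, expct (condX X P x) (ℓ a)) else 0

/-- Auxiliary: the unnormalized conditional loss `∑_{ω : X ω = x} P ω ℓ a ω`. -/
noncomputable def Lfun {Ω 𝒳 𝒜 : Type*} [Fintype Ω] [DecidableEq 𝒳]
    (X : Ω → 𝒳) (ℓ : 𝒜 → Ω → ℝ) (x : 𝒳) (a : 𝒜) (P : Ω → ℝ) : ℝ :=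
  ∑ ω, if X ω = x then P ω * ℓ a ω else 0

lemma expct_decompose {Ω 𝒳 𝒜 : Type*} [Fintype Ω] [Fintype 𝒳] [DecidableEq 𝒳]
    (X : Ω → 𝒳) (ℓ : 𝒜 → Ω → ℝ) (P : Ω → ℝ) (g : 𝒳 → 𝒜) :
    expct P (fun ω => ℓ (g (X ω)) ω) = ∑ x, Lfun X ℓ x (g x) P := by
  unfold expct Lfun
  rw [Finset.sum_comm]
  refine Finset.sum_congr rfl fun ω _ => ?_
  rw [Finset.sum_ite_eq Finset.univ (X ω) (fun x => P ω * ℓ (g x) ω)]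
  simp

lemma expct_condX {Ω 𝒳 : Type*} [Fintype Ω] [DecidableEq 𝒳]
    (X : Ω → 𝒳) (P : Ω → ℝ) (x : 𝒳) (Z : Ω → ℝ) (hm : margin X P x ≠ 0) :
    expct (condX X P x) Z = (∑ ω, if X ω = x then P ω * Z ω else 0) / margin X P x := by
  unfold expct condX
  rw [Finset.sum_div]
  refine Finset.sum_congr rfl fun ω _ => ?_
  by_cases h : X ω = x <;> simp [h] <;> ring

lemma margin_nonneg {Ω 𝒳 : Type*} [Fintype Ω] [DecidableEq 𝒳]
    (X : Ω → 𝒳) (P : Ω → ℝ) (hP : ∀ ω, 0 ≤ P ω) (x : 𝒳) : 0 ≤ margin X P x :=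
  Finset.sum_nonneg fun ω _ => by by_cases h : X ω = x <;> simp [h, hP ω]

lemma margin_comb {Ω 𝒳 : Type*} [Fintype Ω] [DecidableEq 𝒳]
    (X : Ω → 𝒳) (Q R : Ω → ℝ) (c d : ℝ) (x : 𝒳) :
    margin X (fun ω => c * Q ω + d * R ω) x = c * margin X Q x + d * margin X R x := by
  unfold margin
  rw [Finset.mul_sum, Finset.mul_sum, ← Finset.sum_add_distrib]
  refine Finset.sum_congr rfl fun ω _ => ?_
  by_cases h : X ω = x <;> simp [h]

lemma Lfun_comb {Ω 𝒳 𝒜 : Type*} [Fintype Ω] [DecidableEq 𝒳]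
    (X : Ω → 𝒳) (ℓ : 𝒜 → Ω → ℝ) (x : 𝒳) (a : 𝒜) (Q R : Ω → ℝ) (c d : ℝ) :
    Lfun X ℓ x a (fun ω => c * Q ω + d * R ω) = c * Lfun X ℓ x a Q + d * Lfun X ℓ x a R := by
  unfold Lfun
  rw [Finset.mul_sum, Finset.mul_sum, ← Finset.sum_add_distrib]
  refine Finset.sum_congr rfl fun ω _ => ?_
  by_cases h : X ω = x <;> simp [h] <;> ring

lemma expct_comb {Ω : Type*} [Fintype Ω] (Q R Z : Ω → ℝ) (c d : ℝ) :
    expct (c • Q + d • R) Z = c * expct Q Z + d * expct R Z := by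
  unfold expct
  rw [Finset.mul_sum, Finset.mul_sum, ← Finset.sum_add_distrib]
  refine Finset.sum_congr rfl fun ω _ => ?_
  simp [smul_eq_mul]; ring

lemma continuous_expct {Ω : Type*} [Fintype Ω] (Z : Ω → ℝ) :
    Continuous (fun P : Ω → ℝ => expct P Z) := by
  unfold expct
  exact continuous_finset_sum _ fun ω _ => (continuous_apply ω).mul continuous_const

/-- Every element of the closed convex hull of a set of probability measures
is a probability measure. -/
lemma isProb_of_mem_K {Ω : Type*} [Fintype Ω] (Ps : Set (Ω → ℝ))
    (hPs : ∀ P ∈ Ps, IsProb P) {Q : Ω → ℝ} (hQ : Q ∈ closure (convexHull ℝ Ps)) :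
    IsProb Q := by
  have hconv : Convex ℝ {R : Ω → ℝ | IsProb R} := by
    intro R hR S hS a b ha hb hab
    constructor
    · intro ω
      have := hR.1 ω; have := hS.1 ω
      have h1 : (a • R + b • S) ω = a * R ω + b * S ω := by simp [smul_eq_mul]
      rw [h1]
      have := mul_nonneg ha (hR.1 ω); have := mul_nonneg hb (hS.1 ω); linarith
    · have h1 : ∑ ω, (a • R + b • S) ω = a * ∑ ω, R ω + b * ∑ ω, S ω := by
        rw [Finset.mul_sum, Finset.mul_sum, ← Finset.sum_add_distrib]
        exact Finset.sum_congr rfl fun ω _ => by simp [smul_eq_mul]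
      rw [h1, hR.2, hS.2]; linarith
  have hclosed : IsClosed {R : Ω → ℝ | IsProb R} := by
    have h1 : {R : Ω → ℝ | IsProb R}
        = (⋂ ω, {R : Ω → ℝ | 0 ≤ R ω}) ∩ {R : Ω → ℝ | ∑ ω, R ω = 1} := by
      ext R; simp [IsProb, Set.mem_iInter]
    rw [h1]
    refine IsClosed.inter (isClosed_iInter fun ω => ?_) ?_
    · exact isClosed_le continuous_const (continuous_apply ω)
    · exact isClosed_eq (continuous_finset_sum _ fun ω _ => continuous_apply ω)
        continuous_const
  exact closure_minimal (convexHull_min (fun P hP => hPs P hP) hconv) hclosed hQ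

lemma expct_le_upExp {Ω : Type*} [Fintype Ω] (Ps : Set (Ω → ℝ)) (hPsne : Ps.Nonempty)
    (hPs : ∀ P ∈ Ps, IsProb P) (Z : Ω → ℝ) {Q : Ω → ℝ}
    (hQ : Q ∈ closure (convexHull ℝ Ps)) :
    expct Q Z ≤ upExp Ps Z := by
  have hbdd : BddAbove ((fun P => expct P Z) '' Ps) := by
    refine ⟨∑ ω, |Z ω|, ?_⟩
    rintro y ⟨P, hP, rfl⟩
    refine Finset.sum_le_sum fun ω _ => ?_
    have h0 := (hPs P hP).1 ω
    have h1 : P ω ≤ 1 := by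
      have := Finset.single_le_sum (fun i (_ : i ∈ Finset.univ) => (hPs P hP).1 i)
        (Finset.mem_univ ω)
      rw [(hPs P hP).2] at this; exact this
    calc P ω * Z ω ≤ P ω * |Z ω| := by
          exact mul_le_mul_of_nonneg_left (le_abs_self _) h0
      _ ≤ 1 * |Z ω| := mul_le_mul_of_nonneg_right h1 (abs_nonneg _)
      _ = |Z ω| := one_mul _
  have hsub : closure (convexHull ℝ Ps) ⊆ {R : Ω → ℝ | expct R Z ≤ upExp Ps Z} := by
    refine closure_minimal (convexHull_min ?_ ?_) ?_
    · intro P hP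
      exact le_csSup hbdd ⟨P, hP, rfl⟩
    · intro R hR S hS a b ha hb hab
      have h1 : expct (a • R + b • S) Z = a * expct R Z + b * expct S Z := expct_comb _ _ _ _ _
      simp only [Set.mem_setOf_eq] at hR hS ⊢
      rw [h1]
      calc a * expct R Z + b * expct S Z
          ≤ a * upExp Ps Z + b * upExp Ps Z := by
            have := mul_le_mul_of_nonneg_left hR ha
            have := mul_le_mul_of_nonneg_left hS hb
            linarith
        _ = upExp Ps Z := by rw [← add_mul, hab, one_mul]
    · exact isClosed_le (continuous_expct Z) continuous_const
  exact hsub hQ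

/-- If all margins are positive and `astar x` minimizes the (unnormalized) conditional
loss at every `x`, then the conditional entropy equals the expected loss of `astar ∘ X`. -/
lemma condEnt_eq_expct {Ω 𝒳 𝒜 : Type*} [Fintype Ω] [Fintype 𝒳] [DecidableEq 𝒳]
    [Fintype 𝒜] [Nonempty 𝒜] (X : Ω → 𝒳) (ℓ : 𝒜 → Ω → ℝ) (astar : 𝒳 → 𝒜) (Q : Ω → ℝ)
    (hQm : ∀ x, 0 < margin X Q x)
    (hmin : ∀ x a, Lfun X ℓ x (astar x) Q ≤ Lfun X ℓ x a Q) :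
    condEnt X ℓ Q = expct Q (fun ω => ℓ (astar (X ω)) ω) := by
  rw [expct_decompose X ℓ Q astar]
  unfold condEnt
  refine Finset.sum_congr rfl fun x _ => ?_
  rw [if_pos (hQm x)]
  have hm := hQm x
  have hexp : ∀ a, expct (condX X Q x) (ℓ a) = Lfun X ℓ x a Q / margin X Q x :=
    fun a => expct_condX X Q x (ℓ a) hm.ne'
  have hinf : (⨅ a, expct (condX X Q x) (ℓ a)) = expct (condX X Q x) (ℓ (astar x)) := by
    refine le_antisymm (ciInf_le (Finite.bddBelow_range _) _) (le_ciInf fun a => ?_)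
    rw [hexp, hexp]
    exact (div_le_div_iff_of_pos_right hm).mpr (hmin x a)
  rw [hinf, hexp, mul_div_cancel₀ _ hm.ne']

/-- Optimal forecast via conditional maximum entropy: if `Pstar` maximizes the generalized
conditional `ℓ`-entropy over the closed convex hull of `Ps`, gives positive mass to every
`X = x`, and has a unique conditional Bayes action `astar x` at every `x`, then the action
map `astar ∘ X` (i.e., the precise forecast `x ↦ Pstar(·|X=x)`) attains the optimal IP
score among all forecasts under the `Ps` data model, and this score equals
`E_{Pstar}[ℓ(astar(X(·)),·)] = H_ℓ(Pstar | X)`. -/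
theorem optimal_forecast_via_conditional_maxent
    {Ω 𝒳 𝒜 : Type*} [Fintype Ω] [Fintype 𝒳] [DecidableEq 𝒳] [Fintype 𝒜] [Nonempty 𝒜]
    (X : Ω → 𝒳) (hX : Function.Surjective X)
    (ℓ : 𝒜 → Ω → ℝ)
    (Ps : Set (Ω → ℝ)) (hPsne : Ps.Nonempty) (hPs : ∀ P ∈ Ps, IsProb P)
    (Pstar : Ω → ℝ) (hPstar : Pstar ∈ closure (convexHull ℝ Ps))
    (hmaxent : ∀ P ∈ closure (convexHull ℝ Ps), condEnt X ℓ P ≤ condEnt X ℓ Pstar)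
    (hpos : ∀ x : 𝒳, 0 < margin X Pstar x)
    (astar : 𝒳 → 𝒜)
    (huniq : ∀ x : 𝒳,
      {a : 𝒜 | ∀ a' : 𝒜, expct (condX X Pstar x) (ℓ a) ≤ expct (condX X Pstar x) (ℓ a')}
        = {astar x}) :
    (⨅ g : 𝒳 → 𝒜, upExp Ps (fun ω => ℓ (g (X ω)) ω))
        = upExp Ps (fun ω => ℓ (astar (X ω)) ω) ∧
    upExp Ps (fun ω => ℓ (astar (X ω)) ω) = expct Pstar (fun ω => ℓ (astar (X ω)) ω) ∧
    expct Pstar (fun ω => ℓ (astar (X ω)) ω) = condEnt X ℓ Pstar := by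
  classical
  -- nonemptiness
  obtain ⟨P0, hP0⟩ := hPsne
  have hΩ : Nonempty Ω := by
    by_contra h
    have h2 := (hPs P0 hP0).2
    rw [not_nonempty_iff] at h
    simp [Finset.univ_eq_empty] at h2
  have h𝒳 : Nonempty 𝒳 := ⟨X (Classical.arbitrary Ω)⟩
  have hPstarProb : IsProb Pstar := isProb_of_mem_K Ps hPs hPstar
  -- astar x is the unique minimizer
  have hastar_min : ∀ x a, expct (condX X Pstar x) (ℓ (astar x)) ≤ expct (condX X Pstar x) (ℓ a) := by
    intro x a
    have h1 : astar x ∈ ({astar x} : Set 𝒜) := rfl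
    rw [← huniq x] at h1
    exact h1 a
  have hexpP : ∀ x a, expct (condX X Pstar x) (ℓ a) = Lfun X ℓ x a Pstar / margin X Pstar x :=
    fun x a => expct_condX X Pstar x (ℓ a) (hpos x).ne'
  have hLmin : ∀ x a, Lfun X ℓ x (astar x) Pstar ≤ Lfun X ℓ x a Pstar := by
    intro x a
    have := hastar_min x a
    rw [hexpP, hexpP] at this
    exact (div_le_div_iff_of_pos_right (hpos x)).mp this
  have hLstrict : ∀ x a, a ≠ astar x → Lfun X ℓ x (astar x) Pstar < Lfun X ℓ x a Pstar := by
    intro x a ha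
    have hnot : a ∉ ({astar x} : Set 𝒜) := ha
    rw [← huniq x] at hnot
    simp only [Set.mem_setOf_eq, not_forall, not_le] at hnot
    obtain ⟨a', ha'⟩ := hnot
    have h1 : expct (condX X Pstar x) (ℓ (astar x)) < expct (condX X Pstar x) (ℓ a) :=
      lt_of_le_of_lt (hastar_min x a') ha'
    rw [hexpP, hexpP] at h1
    exact (div_lt_div_iff_of_pos_right (hpos x)).mp h1
  set Za := fun ω => ℓ (astar (X ω)) ω with hZa
  have hZa' : ∀ Q : Ω → ℝ, expct Q Za = ∑ x, Lfun X ℓ x (astar x) Q :=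
    fun Q => expct_decompose X ℓ Q astar
  -- claim 3
  have E3 : condEnt X ℓ Pstar = expct Pstar Za :=
    condEnt_eq_expct X ℓ astar Pstar hpos hLmin
  -- key inequality: every P ∈ Ps satisfies expct P Za ≤ expct Pstar Za
  have keyB : ∀ P ∈ Ps, expct P Za ≤ expct Pstar Za := by
    intro P hP
    have hPprob := hPs P hP
    -- constants
    set D : 𝒳 × 𝒜 → ℝ := fun p => Lfun X ℓ p.1 (astar p.1) P - Lfun X ℓ p.1 p.2 P with hD
    set G : 𝒳 × 𝒜 → ℝ := fun p => if p.2 = astar p.1 then 1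
      else Lfun X ℓ p.1 p.2 Pstar - Lfun X ℓ p.1 (astar p.1) Pstar with hG
    have hne : (Finset.univ : Finset (𝒳 × 𝒜)).Nonempty := Finset.univ_nonempty
    set C : ℝ := Finset.univ.sup' hne (fun p => |D p|) with hC
    have hCle : ∀ p : 𝒳 × 𝒜, |D p| ≤ C := by
      intro p; rw [hC]; exact Finset.le_sup' (fun p => |D p|) (Finset.mem_univ p)
    have hC0 : 0 ≤ C := le_trans (abs_nonneg (D (Classical.arbitrary _))) (hCle _)
    set δ : ℝ := Finset.univ.inf' hne G with hδ
    have hδpos : 0 < δ := by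
      rw [hδ, Finset.lt_inf'_iff]
      intro p _
      by_cases h : p.2 = astar p.1
      · simp [hG, h]
      · simp only [hG, if_neg h]
        have := hLstrict p.1 p.2 h
        linarith
    have hδle : ∀ x a, a ≠ astar x →
        δ ≤ Lfun X ℓ x a Pstar - Lfun X ℓ x (astar x) Pstar := by
      intro x a ha
      have h1 : δ ≤ G (x, a) := hδ ▸ Finset.inf'_le G (Finset.mem_univ (x, a))
      simpa [hG, ha] using h1
    set t : ℝ := δ / (2 * (δ + C)) with ht
    have hSC : 0 < 2 * (δ + C) := by linarith
    have hu1 : t * (2 * (δ + C)) = δ := div_mul_cancel₀ _ hSC.ne'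
    have ht0 : 0 < t := div_pos hδpos hSC
    have ht1 : t < 1 := by nlinarith
    have hkey : t * C ≤ (1 - t) * δ := by nlinarith [mul_nonneg ht0.le hC0, mul_nonneg ht0.le hδpos.le]
    -- the mixture
    set Pt : Ω → ℝ := fun ω => (1 - t) * Pstar ω + t * P ω with hPt
    have hPt_mem : Pt ∈ closure (convexHull ℝ Ps) := by
      have hcv : Convex ℝ (closure (convexHull ℝ Ps)) := (convex_convexHull ℝ Ps).closure
      have h2 : P ∈ closure (convexHull ℝ Ps) := subset_closure (subset_convexHull ℝ Ps hP)
      have h3 := hcv hPstar h2 (by linarith : (0:ℝ) ≤ 1 - t) ht0.le (by ring)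
      have hPt_eq : Pt = (1 - t) • Pstar + t • P := by
        funext ω; simp [hPt, smul_eq_mul]
      rw [hPt_eq]; exact h3
    have hPtm : ∀ x, 0 < margin X Pt x := by
      intro x
      rw [hPt, margin_comb]
      have h1 := margin_nonneg X P hPprob.1 x
      have h2 := hpos x
      nlinarith
    have hPtmin : ∀ x a, Lfun X ℓ x (astar x) Pt ≤ Lfun X ℓ x a Pt := by
      intro x a
      rw [hPt, Lfun_comb, Lfun_comb]
      by_cases ha : a = astar x
      · rw [ha]
      · have h1 := hδle x a ha
        have h2 : D (x, a) ≤ C := le_trans (le_abs_self _) (hCle (x, a))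
        have h3 : t * D (x, a) ≤ t * C := mul_le_mul_of_nonneg_left h2 ht0.le
        have h4 : (1 - t) * δ ≤ (1 - t) * (Lfun X ℓ x a Pstar - Lfun X ℓ x (astar x) Pstar) :=
          mul_le_mul_of_nonneg_left h1 (by linarith)
        simp only [hD] at h3
        nlinarith
    have hcompare := hmaxent Pt hPt_mem
    rw [condEnt_eq_expct X ℓ astar Pt hPtm hPtmin, E3] at hcompare
    have hcompare2 : expct Pt Za ≤ expct Pstar Za := hcompare
    have hEPt : expct Pt Za = (1 - t) * expct Pstar Za + t * expct P Za := by
      rw [hZa' Pt, hZa' Pstar, hZa' P, Finset.mul_sum, Finset.mul_sum,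
        ← Finset.sum_add_distrib]
      refine Finset.sum_congr rfl fun x _ => ?_
      rw [hPt, Lfun_comb]
    rw [hEPt] at hcompare2
    nlinarith
  -- claim 2
  have E2 : upExp Ps Za = expct Pstar Za := by
    refine le_antisymm ?_ (expct_le_upExp Ps ⟨P0, hP0⟩ hPs Za hPstar)
    refine csSup_le ⟨expct P0 Za, ⟨P0, hP0, rfl⟩⟩ ?_
    rintro y ⟨P, hP, rfl⟩
    exact keyB P hP
  -- claim 1
  have E1 : (⨅ g : 𝒳 → 𝒜, upExp Ps (fun ω => ℓ (g (X ω)) ω)) = upExp Ps Za := by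
    refine le_antisymm (ciInf_le (Finite.bddBelow_range _) astar) (le_ciInf fun g => ?_)
    have h1 : expct Pstar Za ≤ expct Pstar (fun ω => ℓ (g (X ω)) ω) := by
      rw [hZa' Pstar, expct_decompose X ℓ Pstar g]
      exact Finset.sum_le_sum fun x _ => hLmin x (g x)
    calc upExp Ps Za = expct Pstar Za := E2
      _ ≤ expct Pstar (fun ω => ℓ (g (X ω)) ω) := h1
      _ ≤ upExp Ps (fun ω => ℓ (g (X ω)) ω) :=
          expct_le_upExp Ps ⟨P0, hP0⟩ hPs _ hPstar
  exact ⟨E1, E2, E3.symm⟩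
end

section
/- (Calibration conditions in conditional and unconditional form are equivalent.) Let Ω be a finite set, 𝒫 a nonempty set of probability measures on Ω, B ⊆ Ω with inf_{P∈𝒫} P(B) > 0, and f : Ω → ℝ any gamble. Then sup_{P∈𝒫} E_P[1_B·f] = 0 if and only if sup_{P∈𝒫} E_{P(·|B)}[f] = 0. -/
/-- The probability `P(B)` of the event `B`. -/
noncomputable def probOf {Ω : Type*} [Fintype Ω] (P : Ω → ℝ) (B : Set Ω) : ℝ :=
  ∑ ω, B.indicator P ω

/-- The conditional probability measure `P(· | B)`. -/
noncomputable def condB {Ω : Type*} [Fintype Ω] (P : Ω → ℝ) (B : Set Ω) : Ω → ℝ :=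
  fun ω => B.indicator P ω / probOf P B

/-!
Since `E_{P(·|B)}[f] = E_P[1_B·f] / P(B)` and `inf P(B) ≤ P(B) ≤ 1`, each family is obtained from
the other by multiplying every member with a factor in a bounded interval `[0, M]`. Such a
rescaling keeps all values nonpositive and keeps values close to `0` from below close to `0`,
so it preserves the property "the supremum is `0`".
-/

section RescaledSupremum

variable {ι : Type*} {S : Set ι} {u v q : ι → ℝ} {M : ℝ}

theorem bddAbove_image_of_eq_mul (hv : ∀ i ∈ S, v i = u i * q i)
    (hq : ∀ i ∈ S, 0 ≤ q i ∧ q i ≤ M) (hu : BddAbove (u '' S)) : BddAbove (v '' S) := by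
  obtain ⟨K, hK⟩ := hu
  refine ⟨max K 0 * M, ?_⟩
  rintro _ ⟨i, hi, rfl⟩
  have hui : u i ≤ max K 0 := (hK ⟨i, hi, rfl⟩).trans (le_max_left _ _)
  obtain ⟨hq0, hqM⟩ := hq i hi
  rw [hv i hi]
  calc u i * q i ≤ max K 0 * q i := mul_le_mul_of_nonneg_right hui hq0
    _ ≤ max K 0 * M := mul_le_mul_of_nonneg_left hqM (le_max_right _ _)

theorem sSup_image_eq_zero_of_eq_mul (hv : ∀ i ∈ S, v i = u i * q i)
    (hq : ∀ i ∈ S, 0 ≤ q i ∧ q i ≤ M) (hu : BddAbove (u '' S)) (h : sSup (u '' S) = 0) :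
    sSup (v '' S) = 0 := by
  rcases S.eq_empty_or_nonempty with rfl | hS
  · simp
  have hu_nonpos : ∀ i ∈ S, u i ≤ 0 := fun i hi => h ▸ le_csSup hu ⟨i, hi, rfl⟩
  have hv_nonpos : ∀ i ∈ S, v i ≤ 0 := fun i hi =>
    hv i hi ▸ mul_nonpos_of_nonpos_of_nonneg (hu_nonpos i hi) (hq i hi).1
  have hv_bdd : BddAbove (v '' S) := ⟨0, by rintro _ ⟨i, hi, rfl⟩; exact hv_nonpos i hi⟩
  refine le_antisymm (Real.sSup_nonpos <| by rintro _ ⟨i, hi, rfl⟩; exact hv_nonpos i hi) ?_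
  have hM : 0 < M + 1 := by
    obtain ⟨i, hi⟩ := hS
    linarith [hq i hi]
  refine le_of_forall_pos_lt_add fun δ hδ => ?_
  -- pick `u i > -δ / (M + 1)`; then `v i ≥ (M + 1) * u i > -δ` because `u i ≤ 0`
  obtain ⟨_, ⟨i, hi, rfl⟩, hui⟩ :=
    exists_lt_of_lt_csSup (hS.image u) (h ▸ div_neg_of_neg_of_pos (neg_neg_of_pos hδ) hM)
  have hvi : u i * (M + 1) ≤ v i := by
    rw [hv i hi]
    exact mul_le_mul_of_nonpos_left (by linarith [hq i hi]) (hu_nonpos i hi)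
  have := le_csSup hv_bdd ⟨i, hi, rfl⟩
  rw [div_lt_iff₀ hM] at hui
  linarith

end RescaledSupremum

section FiniteProbability

variable {Ω : Type*} [Fintype Ω] {P : Ω → ℝ}

theorem IsProb.expct_le (hP : IsProb P) {Z : Ω → ℝ} {M : ℝ} (hZ : ∀ ω, Z ω ≤ M) :
    expct P Z ≤ M := by
  calc expct P Z ≤ ∑ ω, P ω * M :=
        Finset.sum_le_sum fun ω _ => mul_le_mul_of_nonneg_left (hZ ω) (hP.1 ω)
    _ = M := by rw [← Finset.sum_mul, hP.2, one_mul]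

theorem IsProb.probOf_nonneg (hP : IsProb P) (B : Set Ω) : 0 ≤ probOf P B :=
  Finset.sum_nonneg fun ω _ => Set.indicator_nonneg (fun ω _ => hP.1 ω) ω

theorem IsProb.probOf_le_one (hP : IsProb P) (B : Set Ω) : probOf P B ≤ 1 :=
  hP.2 ▸ Finset.sum_le_sum fun ω _ => Set.indicator_le_self' (fun ω _ => hP.1 ω) ω

theorem expct_condB (P : Ω → ℝ) (B : Set Ω) (f : Ω → ℝ) :
    expct (condB P B) f = expct P (B.indicator f) / probOf P B := by
  unfold expct condB
  rw [Finset.sum_div]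
  refine Finset.sum_congr rfl fun ω _ => ?_
  by_cases hω : ω ∈ B <;> simp [hω, div_mul_eq_mul_div]

end FiniteProbability

theorem calibration_conditional_unconditional_equiv_general
    {Ω : Type*} [Fintype Ω]
    (Ps : Set (Ω → ℝ)) (hPs : ∀ P ∈ Ps, IsProb P)
    (B : Set Ω) (hB : 0 < sInf ((fun P => probOf P B) '' Ps))
    (f : Ω → ℝ) :
    sSup ((fun P => expct P (B.indicator f)) '' Ps) = 0
      ↔ sSup ((fun P => expct (condB P B) f) '' Ps) = 0 := by
  set ε := sInf ((fun P => probOf P B) '' Ps)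
  have hε_le : ∀ P ∈ Ps, ε ≤ probOf P B := fun P hP =>
    csInf_le ⟨0, by rintro _ ⟨Q, hQ, rfl⟩; exact (hPs Q hQ).probOf_nonneg B⟩ ⟨P, hP, rfl⟩
  have hpos : ∀ P ∈ Ps, 0 < probOf P B := fun P hP => hB.trans_le (hε_le P hP)
  have hbounds : ∀ P ∈ Ps, 0 ≤ probOf P B ∧ probOf P B ≤ 1 := fun P hP =>
    ⟨(hpos P hP).le, (hPs P hP).probOf_le_one B⟩
  have hinv_bounds : ∀ P ∈ Ps, 0 ≤ (probOf P B)⁻¹ ∧ (probOf P B)⁻¹ ≤ ε⁻¹ := fun P hP =>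
    ⟨inv_nonneg.2 (hpos P hP).le, inv_anti₀ hB (hε_le P hP)⟩
  have hcond : ∀ P ∈ Ps, expct (condB P B) f = expct P (B.indicator f) * (probOf P B)⁻¹ :=
    fun P _ => expct_condB P B f
  have huncond : ∀ P ∈ Ps, expct P (B.indicator f) = expct (condB P B) f * probOf P B :=
    fun P hP => by rw [expct_condB, div_mul_cancel₀ _ (hpos P hP).ne']
  obtain ⟨K, hK⟩ := (Set.finite_range (B.indicator f)).bddAbove
  have hbdd : BddAbove ((fun P => expct P (B.indicator f)) '' Ps) :=
    ⟨K, by rintro _ ⟨P, hP, rfl⟩; exact (hPs P hP).expct_le fun ω => hK ⟨ω, rfl⟩⟩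
  exact ⟨sSup_image_eq_zero_of_eq_mul hcond hinv_bounds hbdd,
    sSup_image_eq_zero_of_eq_mul huncond hbounds
      (bddAbove_image_of_eq_mul hcond hinv_bounds hbdd)⟩

/-- Calibration conditions in conditional and unconditional form are equivalent: if
`inf_{P∈Ps} P(B) > 0`, then `sup_{P∈Ps} E_P[1_B·f] = 0` iff
`sup_{P∈Ps} E_{P(·|B)}[f] = 0`. -/
theorem calibration_conditional_unconditional_equiv
    {Ω : Type*} [Fintype Ω]
    (Ps : Set (Ω → ℝ)) (hPsne : Ps.Nonempty) (hPs : ∀ P ∈ Ps, IsProb P)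
    (B : Set Ω) (hB : 0 < sInf ((fun P => probOf P B) '' Ps))
    (f : Ω → ℝ) :
    sSup ((fun P => expct P (B.indicator f)) '' Ps) = 0
      ↔ sSup ((fun P => expct (condB P B) f) '' Ps) = 0 :=
  calibration_conditional_unconditional_equiv_general Ps hPs B hB f
end
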